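/- arXiv:0901.2586 — 3 statements merged into one kernel-verified Lean document; each statement's English description precedes it below -/
import Mathlib

section
/- The weighted arithmetic mean uniquely minimizes the weighted sum of Bregman divergences in the second argument: argmin_y ∑ᵢ γᵢ D_φ(xᵢ‖y) = (1/Γ)∑ᵢ γᵢ xᵢ. -/
noncomputable def bregman (φ φ' : ℝ → ℝ) (x y : ℝ) : ℝ :=
  φ x - φ y - (x - y) * φ' y

lemma bregman_pos (X : Set ℝ) (φ φ' : ℝ → ℝ)
    (hconv : StrictConvexOn ℝ X φ)
    (hderiv : ∀ y ∈ X, HasDerivAt φ (φ' y) y)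
    {z y : ℝ} (hz : z ∈ X) (hy : y ∈ X) (hne : z ≠ y) :
    0 < φ z - φ y - (z - y) * φ' y := by
  rcases lt_or_gt_of_ne hne with h | h
  · have := hconv.slope_lt_of_hasDerivAt hz hy h (hderiv y hy)
    rw [slope_def_field, div_lt_iff₀ (by linarith)] at this
    nlinarith
  · have := hconv.lt_slope_of_hasDerivAt hy hz h (hderiv y hy)
    rw [slope_def_field, lt_div_iff₀ (by linarith)] at this
    nlinarith

/-- The weighted arithmetic mean uniquely minimizes `y ↦ ∑ᵢ γᵢ D_φ(xᵢ‖y)`. -/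
theorem arithmetic_mean_minimizes (X : Set ℝ) (hX : Convex ℝ X) (hXo : IsOpen X)
    (φ φ' : ℝ → ℝ)
    (hconv : StrictConvexOn ℝ X φ)
    (hderiv : ∀ y ∈ X, HasDerivAt φ (φ' y) y)
    (m : ℕ) (hm : 0 < m) (γ : Fin m → ℝ) (hγ : ∀ i, 0 < γ i)
    (x : Fin m → ℝ) (hx : ∀ i, x i ∈ X)
    (μ : ℝ) (hμ : μ = (∑ i, γ i)⁻¹ * ∑ i, γ i * x i) (hμX : μ ∈ X) :
    ∀ y ∈ X, y ≠ μ →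
      ∑ i, γ i * bregman φ φ' (x i) μ < ∑ i, γ i * bregman φ φ' (x i) y := by
  intro y hy hyne
  have hΓ : 0 < ∑ i, γ i :=
    Finset.sum_pos (fun i _ => hγ i) (Finset.univ_nonempty_iff.2 ⟨⟨0, hm⟩⟩)
  have hS : ∑ i, γ i * x i = (∑ i, γ i) * μ := by
    rw [hμ]; field_simp
  have key : ∀ w : ℝ, ∑ i, γ i * bregman φ φ' (x i) w =
      (∑ i, γ i * φ (x i)) - (∑ i, γ i) * φ w
        - ((∑ i, γ i * x i) - (∑ i, γ i) * w) * φ' w := by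
    intro w
    have : ∀ i : Fin m, γ i * bregman φ φ' (x i) w =
        γ i * φ (x i) - γ i * φ w - (γ i * x i - γ i * w) * φ' w := by
      intro i; unfold bregman; ring
    rw [Finset.sum_congr rfl fun i _ => this i]
    simp [Finset.sum_sub_distrib, ← Finset.sum_mul, ← Finset.mul_sum,
      Finset.mul_sum, sub_mul]
  have hpos : 0 < φ μ - φ y - (μ - y) * φ' y :=
    bregman_pos X φ φ' hconv hderiv hμX hy (Ne.symm hyne)
  rw [key y, key μ, hS]
  nlinarith [hΓ, hpos]
end

section
/- The LDA μ_φ = (φ')⁻¹((1/Γ)∑ᵢ γᵢ φ'(xᵢ)) uniquely minimizes y ↦ ∑ᵢ γᵢ D_φ(y‖xᵢ) over y in the domain. -/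
/-- Strict convexity gradient inequality. -/
lemma strict_grad (X : Set ℝ) (φ φ' : ℝ → ℝ) (hconv : StrictConvexOn ℝ X φ)
    (μ y : ℝ) (hμ : μ ∈ X) (hy : y ∈ X) (hne : y ≠ μ)
    (hd : HasDerivAt φ (φ' μ) μ) :
    φ μ + (y - μ) * φ' μ < φ y := by
  rcases lt_or_gt_of_ne hne with h | h
  · have := hconv.slope_lt_of_hasDerivAt hy hμ h hd
    rw [slope_def_field, div_lt_iff₀ (by linarith)] at this
    nlinarith
  · have := hconv.lt_slope_of_hasDerivAt hμ hy h hd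
    rw [slope_def_field, lt_div_iff₀ (by linarith)] at this
    nlinarith

/-- The LDA `μ_φ = (φ')⁻¹((1/Γ)∑ᵢ γᵢ φ'(xᵢ))` uniquely minimizes
`y ↦ ∑ᵢ γᵢ D_φ(y‖xᵢ)` over the domain. -/
theorem lda_minimizes (X : Set ℝ) (hX : Convex ℝ X) (hXo : IsOpen X)
    (φ φ' : ℝ → ℝ)
    (hconv : StrictConvexOn ℝ X φ)
    (hderiv : ∀ y ∈ X, HasDerivAt φ (φ' y) y)
    (m : ℕ) (hm : 0 < m) (γ : Fin m → ℝ) (hγ : ∀ i, 0 < γ i)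
    (x : Fin m → ℝ) (hx : ∀ i, x i ∈ X)
    (μ : ℝ) (hμX : μ ∈ X)
    (hμ : φ' μ = (∑ i, γ i)⁻¹ * ∑ i, γ i * φ' (x i)) :
    ∀ y ∈ X, y ≠ μ →
      ∑ i, γ i * bregman φ φ' μ (x i) < ∑ i, γ i * bregman φ φ' y (x i) := by
  intro y hy hne
  have hΓ : 0 < ∑ i, γ i :=
    Finset.sum_pos (fun i _ => hγ i) (Finset.univ_nonempty_iff.2 ⟨⟨0, hm⟩⟩)
  have hsum : ∑ i, γ i * φ' (x i) = (∑ i, γ i) * φ' μ := by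
    rw [hμ]; field_simp
  have hgrad := strict_grad X φ φ' hconv μ y hμX hy hne (hderiv μ hμX)
  have key : ∑ i, γ i * bregman φ φ' y (x i) - ∑ i, γ i * bregman φ φ' μ (x i)
      = (∑ i, γ i) * (φ y - φ μ) - (y - μ) * ((∑ i, γ i) * φ' μ) := by
    rw [← hsum, Finset.sum_mul, Finset.mul_sum, ← Finset.sum_sub_distrib,
      ← Finset.sum_sub_distrib]
    apply Finset.sum_congr rfl
    intro i _
    simp only [bregman]; ring
  nlinarith [mul_lt_mul_of_pos_left hgrad hΓ]
end

section
/- Dual Bregman decomposition around the LDA: for any c' in the domain, ∑ᵢ γᵢ D_φ(c'‖xᵢ) = Γ·D_φ(c'‖μ_φ) + ∑ᵢ γᵢ D_φ(μ_φ‖xᵢ), where μ_φ = (φ')⁻¹((1/Γ)∑ᵢ γᵢ φ'(xᵢ)). -/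
/-- Dual Bregman decomposition around the LDA `μ_φ = (φ')⁻¹((1/Γ)∑ᵢ γᵢ φ'(xᵢ))`. -/
theorem bregman_decomposition_lda (X : Set ℝ) (hX : Convex ℝ X) (φ φ' : ℝ → ℝ)
    (hconv : StrictConvexOn ℝ X φ)
    (hderiv : ∀ y ∈ X, HasDerivAt φ (φ' y) y)
    (hinj : Set.InjOn φ' X)
    (m : ℕ) (hm : 0 < m) (γ : Fin m → ℝ) (hγ : ∀ i, 0 < γ i)
    (x : Fin m → ℝ) (hx : ∀ i, x i ∈ X)
    (μ : ℝ) (hμX : μ ∈ X)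
    (hμ : φ' μ = (∑ i, γ i)⁻¹ * ∑ i, γ i * φ' (x i))
    (c' : ℝ) (hc' : c' ∈ X) :
    ∑ i, γ i * bregman φ φ' c' (x i)
      = (∑ i, γ i) * bregman φ φ' c' μ + ∑ i, γ i * bregman φ φ' μ (x i) := by
  have hΓ : (0:ℝ) < ∑ i, γ i :=
    Finset.sum_pos (fun i _ => hγ i) (Finset.univ_nonempty_iff.mpr ⟨⟨0, hm⟩⟩)
  have key : ∑ i, γ i * φ' (x i) = (∑ i, γ i) * φ' μ := by
    rw [hμ, ← mul_assoc, mul_inv_cancel₀ hΓ.ne', one_mul]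
  simp only [bregman, mul_sub]
  simp only [Finset.sum_sub_distrib]
  have h1 : ∑ i, γ i * ((c' - x i) * φ' (x i)) - ∑ i, γ i * ((μ - x i) * φ' (x i))
      = (∑ i, γ i) * ((c' - μ) * φ' μ) := by
    have e : ∑ i, γ i * ((c' - x i) * φ' (x i)) - ∑ i, γ i * ((μ - x i) * φ' (x i))
        = (c' - μ) * ∑ i, γ i * φ' (x i) := by
      rw [Finset.mul_sum, ← Finset.sum_sub_distrib]
      exact Finset.sum_congr rfl fun i _ => by ring
    rw [e, key]; ring
  have h2 : ∑ i, γ i * φ c' = (∑ i, γ i) * φ c' := by rw [Finset.sum_mul]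
  have h3 : ∑ i, γ i * φ μ = (∑ i, γ i) * φ μ := by rw [Finset.sum_mul]
  linarith [h1]
end
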